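/- arXiv:1504.07851 — 2 statements merged into one kernel-verified Lean document; each statement's English description precedes it below -/
import Mathlib

section
/- Let R and S be strings over an alphabet Σ, let C be a cover of S with respect to R of size m, and let 1 ≤ j < |S|. Then there exist a cover C1 of the prefix S[1..j] with respect to R and a cover C2 of the suffix S[j+1..|S|] with respect to R such that |C1| + |C2| ≤ m + 1. -/
/-- `sub R i j` is the substring `R[i..j]` of `R` (1-indexed, inclusive). -/
def sub {σ : Type*} (R : List σ) (i j : ℕ) : List σ := (R.drop (i - 1)).take (j - i + 1)

/-- The string of `R` referred to by a block `(i, j)`. -/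
def blockStr {σ : Type*} (R : List σ) (b : ℕ × ℕ) : List σ := sub R b.1 b.2

/-- `C` is a cover (relative compression) of `S` with respect to `R`. -/
def IsCover {σ : Type*} (R S : List σ) (C : List (ℕ × ℕ)) : Prop :=
  (∀ b ∈ C, 1 ≤ b.1 ∧ b.1 ≤ b.2 ∧ b.2 ≤ R.length) ∧
  S = (C.map (blockStr R)).flatten

/-!
Cut the cover at position `j`: blocks ending before `j` go to the prefix, blocks starting after
`j` go to the suffix, and the one block straddling `j` is cut into two blocks of `R`, since a
prefix or suffix of a substring of `R` is again a substring of `R`. Only that cut adds a block.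
-/

def IsBlock {σ : Type*} (R : List σ) (b : ℕ × ℕ) : Prop :=
  1 ≤ b.1 ∧ b.1 ≤ b.2 ∧ b.2 ≤ R.length

section

variable {σ : Type*} {R : List σ}

theorem IsBlock.length_blockStr {b : ℕ × ℕ} (hb : IsBlock R b) :
    (blockStr R b).length = b.2 - b.1 + 1 := by
  simp only [blockStr, sub, List.length_take, List.length_drop]
  unfold IsBlock at hb
  omega

theorem IsBlock.take_blockStr {b : ℕ × ℕ} (hb : IsBlock R b) {k : ℕ}
    (hk0 : 0 < k) (hk : k ≤ (blockStr R b).length) :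
    (blockStr R b).take k = blockStr R (b.1, b.1 + k - 1) := by
  rw [hb.length_blockStr] at hk
  simp only [blockStr, sub, List.take_take]
  congr 1
  omega

theorem IsBlock.drop_blockStr {b : ℕ × ℕ} (hb : IsBlock R b) {k : ℕ}
    (hk : k < (blockStr R b).length) :
    (blockStr R b).drop k = blockStr R (b.1 + k, b.2) := by
  rw [hb.length_blockStr] at hk
  obtain ⟨h1, h2, -⟩ := hb
  simp only [blockStr, sub, List.drop_take, List.drop_drop]
  congr 2 <;> omega

theorem isCover_nil : IsCover R [] [] := by
  simp [IsCover]

theorem isCover_singleton {b : ℕ × ℕ} (hb : IsBlock R b) : IsCover R (blockStr R b) [b] := by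
  simpa [IsCover, IsBlock] using hb

theorem IsCover.append {S T : List σ} {C D : List (ℕ × ℕ)} (hS : IsCover R S C)
    (hT : IsCover R T D) : IsCover R (S ++ T) (C ++ D) := by
  obtain ⟨hC, rfl⟩ := hS
  obtain ⟨hD, rfl⟩ := hT
  refine ⟨fun b hb => ?_, by simp⟩
  rcases List.mem_append.mp hb with hb | hb
  exacts [hC b hb, hD b hb]

theorem isCover_cons_iff {S : List σ} {b : ℕ × ℕ} {C : List (ℕ × ℕ)} :
    IsCover R S (b :: C) ↔ IsBlock R b ∧ ∃ T, IsCover R T C ∧ S = blockStr R b ++ T := by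
  simp [IsCover, IsBlock, and_assoc]

theorem IsBlock.exists_split {b : ℕ × ℕ} (hb : IsBlock R b) {k : ℕ}
    (hk : k < (blockStr R b).length) :
    ∃ P Q : List (ℕ × ℕ), IsCover R ((blockStr R b).take k) P ∧
      IsCover R ((blockStr R b).drop k) Q ∧ P.length + Q.length ≤ 2 := by
  rcases Nat.eq_zero_or_pos k with rfl | hk0
  · exact ⟨[], [b], by simpa using isCover_nil, by simpa using isCover_singleton hb, by simp⟩
  have hlen := hb.length_blockStr
  have ⟨h1, h2, h3⟩ := hb
  refine ⟨[(b.1, b.1 + k - 1)], [(b.1 + k, b.2)], ?_, ?_, by simp⟩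
  · rw [hb.take_blockStr hk0 hk.le]
    exact isCover_singleton (by unfold IsBlock; omega)
  · rw [hb.drop_blockStr hk]
    exact isCover_singleton (by unfold IsBlock; omega)

theorem IsCover.exists_split {S : List σ} {C : List (ℕ × ℕ)} (hC : IsCover R S C) (j : ℕ) :
    ∃ C1 C2 : List (ℕ × ℕ),
      IsCover R (S.take j) C1 ∧ IsCover R (S.drop j) C2 ∧ C1.length + C2.length ≤ C.length + 1 := by
  induction C generalizing S j with
  | nil =>
    obtain ⟨-, rfl⟩ := hC
    exact ⟨[], [], by simpa using isCover_nil, by simpa using isCover_nil, by simp⟩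
  | cons b C ih =>
    obtain ⟨hb, T, hT, rfl⟩ := isCover_cons_iff.mp hC
    rcases lt_or_ge j (blockStr R b).length with hj | hj
    · obtain ⟨P, Q, hP, hQ, hPQ⟩ := hb.exists_split hj
      refine ⟨P, Q ++ C, ?_, ?_, by simp; omega⟩
      · rwa [List.take_append_of_le_length hj.le]
      · rw [List.drop_append_of_le_length hj.le]
        exact hQ.append hT
    · obtain ⟨C1, C2, h1, h2, hlen⟩ := ih hT (j - (blockStr R b).length)
      refine ⟨b :: C1, C2, ?_, ?_, by simp; omega⟩
      · rw [List.take_append, List.take_of_length_le hj]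
        exact (isCover_singleton hb).append h1
      · rwa [List.drop_append, List.drop_eq_nil_of_le hj, List.nil_append]

end

theorem split_cover_general {σ : Type*} (R S : List σ) (C : List (ℕ × ℕ))
    (hC : IsCover R S C) (j : ℕ) :
    ∃ C1 C2 : List (ℕ × ℕ),
      IsCover R (S.take j) C1 ∧ IsCover R (S.drop j) C2 ∧
      C1.length + C2.length ≤ C.length + 1 :=
  hC.exists_split j

/-- If `S` has a cover of size `m` w.r.t. `R` and `1 ≤ j < |S|`, then the prefix
`S[1..j]` and the suffix `S[j+1..|S|]` have covers `C1`, `C2` with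
`|C1| + |C2| ≤ m + 1`. -/
theorem split_cover {σ : Type*} (R S : List σ) (C : List (ℕ × ℕ))
    (hC : IsCover R S C) (j : ℕ) (hj1 : 1 ≤ j) (hj2 : j < S.length) :
    ∃ C1 C2 : List (ℕ × ℕ),
      IsCover R (S.take j) C1 ∧ IsCover R (S.drop j) C2 ∧
      C1.length + C2.length ≤ C.length + 1 :=
  split_cover_general R S C hC j
end

section
/- Let R and S be strings over an alphabet Σ, let C be a cover of S with respect to R of size m, let 1 ≤ i ≤ |S|, and let α be a character occurring in R. Then the string obtained from S by replacing its i-th character with α has a cover with respect to R of size at most m + 2. -/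
/-- The character `α` occurs in `R`, i.e. `[α] = R[i..i]` for some `1 ≤ i ≤ |R|`. -/
def OccursIn {σ : Type*} (α : σ) (R : List σ) : Prop :=
  ∃ i, 1 ≤ i ∧ i ≤ R.length ∧ [α] = sub R i i

/-!
Cutting a cover at one position of the covered string splits at most one block into two, so
`S[1..i]` and `S[i+1..]` together have a cover with at most `m + 1` blocks, and truncating a cover
never adds blocks. Covering `S[1..i-1]`, then `α` by a single block, then `S[i+1..]` gives `m + 2`.
-/

section

variable {σ : Type*} {R : List σ}

namespace IsCover

theorem nil : IsCover R [] [] := ⟨by simp, rfl⟩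

theorem append_s16 {S T : List σ} {C D : List (ℕ × ℕ)} (hC : IsCover R S C) (hD : IsCover R T D) :
    IsCover R (S ++ T) (C ++ D) := by
  refine ⟨fun b hb => ?_, by rw [hC.2, hD.2, List.map_append, List.flatten_append]⟩
  rcases List.mem_append.1 hb with hb | hb
  exacts [hC.1 b hb, hD.1 b hb]

theorem flatten {C : List (ℕ × ℕ)} (hC : ∀ b ∈ C, 1 ≤ b.1 ∧ b.1 ≤ b.2 ∧ b.2 ≤ R.length) :
    IsCover R (C.map (blockStr R)).flatten C :=
  ⟨hC, rfl⟩

end IsCover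

theorem blockStr_isInfix (R : List σ) (b : ℕ × ℕ) : blockStr R b <:+: R :=
  (List.take_prefix _ _).isInfix.trans (List.drop_suffix _ _).isInfix

theorem OccursIn.singleton_isInfix {α : σ} (hα : OccursIn α R) : [α] <:+: R := by
  obtain ⟨k, -, -, hk⟩ := hα
  exact hk ▸ blockStr_isInfix R (k, k)

theorem exists_isCover_length_le_one_of_isInfix {T : List σ} (hT : T <:+: R) :
    ∃ D, IsCover R T D ∧ D.length ≤ 1 := by
  obtain ⟨s, t, rfl⟩ := hT
  rcases eq_or_ne T [] with rfl | hne
  · exact ⟨[], IsCover.nil, by simp⟩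
  have hpos : 0 < T.length := List.length_pos_iff.2 hne
  refine ⟨[(s.length + 1, s.length + T.length)], ⟨?_, ?_⟩, by simp⟩
  · simp only [List.mem_singleton, forall_eq, List.length_append]
    omega
  · have hlen : s.length + T.length - (s.length + 1) + 1 = T.length := by omega
    simp [blockStr, sub, hlen, List.append_assoc]

namespace IsCover

variable {S : List σ} {C : List (ℕ × ℕ)}

theorem exists_take (hC : IsCover R S C) (n : ℕ) :
    ∃ D, IsCover R (S.take n) D ∧ D.length ≤ C.length := by
  obtain ⟨hvalid, rfl⟩ := hC
  induction C generalizing n with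
  | nil => exact ⟨[], by simpa using nil, le_rfl⟩
  | cons c C ih =>
    have hT : ∀ b ∈ C, _ := fun b hb => hvalid b (List.mem_cons_of_mem c hb)
    obtain ⟨D₁, hD₁, hD₁len⟩ := exists_isCover_length_le_one_of_isInfix
      ((List.take_prefix n _).isInfix.trans (blockStr_isInfix R c))
    obtain ⟨D₂, hD₂, hD₂len⟩ := ih (n - (blockStr R c).length) hT
    refine ⟨D₁ ++ D₂, ?_, by rw [List.length_append, List.length_cons]; omega⟩
    simpa only [List.map_cons, List.flatten_cons, List.take_append] using hD₁.append_s16 hD₂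

theorem exists_split_s16 (hC : IsCover R S C) (n : ℕ) :
    ∃ C₁ C₂, IsCover R (S.take n) C₁ ∧ IsCover R (S.drop n) C₂ ∧
      C₁.length + C₂.length ≤ C.length + 1 := by
  obtain ⟨hvalid, rfl⟩ := hC
  induction C generalizing n with
  | nil => exact ⟨[], [], by simpa using nil, by simpa using nil, by simp⟩
  | cons c C ih =>
    have hT : ∀ b ∈ C, _ := fun b hb => hvalid b (List.mem_cons_of_mem c hb)
    set B := blockStr R c
    simp only [List.map_cons, List.flatten_cons, List.length_cons]
    rcases le_or_gt n B.length with hn | hn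
    · obtain ⟨D₁, hD₁, hD₁len⟩ := exists_isCover_length_le_one_of_isInfix
        ((List.take_prefix n B).isInfix.trans (blockStr_isInfix R c))
      obtain ⟨D₂, hD₂, hD₂len⟩ := exists_isCover_length_le_one_of_isInfix
        ((List.drop_suffix n B).isInfix.trans (blockStr_isInfix R c))
      refine ⟨D₁, D₂ ++ C, ?_, ?_, by rw [List.length_append]; omega⟩
      · rwa [List.take_append_of_le_length hn]
      · rw [List.drop_append_of_le_length hn]
        exact hD₂.append_s16 (flatten hT)
    · obtain ⟨C₁, C₂, hC₁, hC₂, hlen⟩ := ih (n - B.length) hT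
      have hB : IsCover R B [c] := ⟨by simpa using hvalid c (by simp), by simp [B]⟩
      refine ⟨[c] ++ C₁, C₂, ?_, ?_, by rw [List.length_append, List.length_singleton]; omega⟩
      · rw [List.take_append, List.take_of_length_le hn.le]
        exact hB.append_s16 hC₁
      · rwa [List.drop_append, List.drop_eq_nil_of_le hn.le, List.nil_append]

end IsCover

end

theorem replace_cover_general {σ : Type*} (R S : List σ) (C : List (ℕ × ℕ))
    (hC : IsCover R S C) (i : ℕ) (α : σ) (hα : OccursIn α R) :
    ∃ C' : List (ℕ × ℕ),
      IsCover R (S.take (i - 1) ++ [α] ++ S.drop i) C' ∧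
      C'.length ≤ C.length + 2 := by
  obtain ⟨C₁, C₂, hC₁, hC₂, hlen⟩ := hC.exists_split_s16 i
  obtain ⟨D, hD, hDlen⟩ := hC₁.exists_take (i - 1)
  obtain ⟨A, hA, hAlen⟩ := exists_isCover_length_le_one_of_isInfix hα.singleton_isInfix
  rw [List.take_take, min_eq_left (Nat.sub_le i 1)] at hD
  exact ⟨D ++ A ++ C₂, (hD.append_s16 hA).append_s16 hC₂, by simp only [List.length_append]; omega⟩

/-- If `S` has a cover of size `m` w.r.t. `R`, `1 ≤ i ≤ |S|`, and `α` occurs in `R`,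
then the string obtained by replacing the `i`-th character of `S` with `α` has a
cover of size at most `m + 2`. -/
theorem replace_cover {σ : Type*} (R S : List σ) (C : List (ℕ × ℕ))
    (hC : IsCover R S C) (i : ℕ) (hi1 : 1 ≤ i) (hi2 : i ≤ S.length)
    (α : σ) (hα : OccursIn α R) :
    ∃ C' : List (ℕ × ℕ),
      IsCover R (S.take (i - 1) ++ [α] ++ S.drop i) C' ∧
      C'.length ≤ C.length + 2 :=
  replace_cover_general R S C hC i α hα
end
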